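/- arXiv:1506.07032 — 4 statements merged into one kernel-verified Lean document; each statement's English description precedes it below -/
import Mathlib

section
/- Let (V, E) be a temporal network with E finite and all durations nonnegative, and let x, y be temporal vertices that belong to the vertex set V̂ of the DAG representation of (V, E). Then x ⇝ y (there is a temporal path from x to y in the temporal network) if and only if there is a directed path from x to y in the DAG representation, i.e., Relation.ReflTransGen Ê x y. (Lemma 2 of the paper.) -/
/-!
A temporal network is a pair `(V, E)` where `E` is a finite set of temporal edges
`(u, v, σ, λ)` with vertices `u v : V`, starting time `σ : ℝ` and duration `λ ≥ 0`
(ending time `σ + λ`).  A temporal vertex is a pair in `V × ℝ`.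
-/

/-- One step of temporal reachability: from `(a, τ)` we may either wait at the same
vertex until a time `τ′ ≥ τ`, or traverse a temporal edge `(a, b, σ, λ) ∈ E` with
`τ ≤ σ` and arrive at `b` at any time `τ′ ≥ σ + λ`. -/
def temporalStep {V : Type*} (E : Set (V × V × ℝ × ℝ)) (x y : V × ℝ) : Prop :=
  (x.1 = y.1 ∧ x.2 ≤ y.2) ∨
  ∃ σ lam : ℝ, (x.1, y.1, σ, lam) ∈ E ∧ x.2 ≤ σ ∧ σ + lam ≤ y.2

/-- Temporal reachability `⇝`: the reflexive–transitive closure of the step relation. -/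
def temporalReach {V : Type*} (E : Set (V × V × ℝ × ℝ)) : V × ℝ → V × ℝ → Prop :=
  Relation.ReflTransGen (temporalStep E)

/-- The vertex set `V̂` of the DAG representation of a temporal network. -/
def dagVertices {V : Type*} (E : Set (V × V × ℝ × ℝ)) : Set (V × ℝ) :=
  {p | ∃ b : V, ∃ lam : ℝ, (p.1, b, p.2, lam) ∈ E} ∪
  {p | ∃ a : V, ∃ σ lam : ℝ, (a, p.1, σ, lam) ∈ E ∧ p.2 = σ + lam}

/-- The edge relation `Ê` of the DAG representation of a temporal network:
(i) `(u, σ) → (v, σ + λ)` for every temporal edge `(u, v, σ, λ) ∈ E`;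
(ii) `(u, τ) → (u, τ′)` whenever `(u, τ), (u, τ′) ∈ V̂`, `τ < τ′`, and there is
no `(u, τ″) ∈ V̂` with `τ < τ″ < τ′`. -/
def dagEdge {V : Type*} (E : Set (V × V × ℝ × ℝ)) (x y : V × ℝ) : Prop :=
  (∃ lam : ℝ, (x.1, y.1, x.2, lam) ∈ E ∧ y.2 = x.2 + lam) ∨
  (x.1 = y.1 ∧ x ∈ dagVertices E ∧ y ∈ dagVertices E ∧ x.2 < y.2 ∧
    ¬ ∃ τ'' : ℝ, (x.1, τ'') ∈ dagVertices E ∧ x.2 < τ'' ∧ τ'' < y.2)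

lemma dagVertices_finite {V : Type*} {E : Set (V × V × ℝ × ℝ)} (hE : E.Finite) :
    (dagVertices E).Finite := by
  apply Set.Finite.subset
    ((hE.image (fun e => (e.1, e.2.2.1))).union (hE.image (fun e => (e.2.1, e.2.2.1 + e.2.2.2))))
  rintro ⟨v, τ⟩ (⟨b, lam, h⟩ | ⟨a, σ, lam, h, hτ⟩)
  · exact Or.inl ⟨(v, b, τ, lam), h, rfl⟩
  · exact Or.inr ⟨(a, v, σ, lam), h, by simp [hτ]; exact hτ.symm⟩

/-- Wait chain: within `V̂`, from `(v,s)` to `(v,t)` with `s ≤ t` there is a path of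
waiting edges. -/
lemma dag_wait_chain {V : Type*} {E : Set (V × V × ℝ × ℝ)} (hE : E.Finite) :
    ∀ n : ℕ, ∀ v : V, ∀ s t : ℝ,
      (dagVertices E ∩ {p | p.1 = v ∧ s < p.2 ∧ p.2 < t}).ncard ≤ n →
      (v, s) ∈ dagVertices E → (v, t) ∈ dagVertices E → s ≤ t →
      Relation.ReflTransGen (dagEdge E) (v, s) (v, t) := by
  have hVfin := dagVertices_finite hE
  intro n
  induction n with
  | zero =>
    intro v s t hcard hs ht hst
    rcases eq_or_lt_of_le hst with rfl | hlt
    · exact .refl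
    · refine .single (Or.inr ⟨rfl, hs, ht, hlt, ?_⟩)
      rintro ⟨τ, hτV, h1, h2⟩
      have hmem : ((v, τ) : V × ℝ) ∈ dagVertices E ∩ {p | p.1 = v ∧ s < p.2 ∧ p.2 < t} :=
        ⟨hτV, rfl, h1, h2⟩
      have hpos := Set.ncard_pos (hVfin.subset Set.inter_subset_left) |>.mpr ⟨_, hmem⟩
      omega
  | succ n ih =>
    intro v s t hcard hs ht hst
    rcases eq_or_lt_of_le hst with rfl | hlt
    · exact .refl
    set M := dagVertices E ∩ {p | p.1 = v ∧ s < p.2 ∧ p.2 < t} with hM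
    have hMfin : M.Finite := hVfin.subset Set.inter_subset_left
    rcases M.eq_empty_or_nonempty with hemp | hne
    · refine .single (Or.inr ⟨rfl, hs, ht, hlt, ?_⟩)
      rintro ⟨τ, hτV, h1, h2⟩
      exact absurd (Set.eq_empty_iff_forall_notMem.mp hemp ((v, τ)) ⟨hτV, rfl, h1, h2⟩) (fun h => h)
    · obtain ⟨p, hpM, hpmin⟩ := Set.exists_min_image M Prod.snd hMfin hne
      obtain ⟨hpV, hp1, hps, hpt⟩ := id hpM
      have hpeq : p = (v, p.2) := by
        rw [← hp1]
      have hpV' : (v, p.2) ∈ dagVertices E := hpeq ▸ hpV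
      have edge1 : dagEdge E (v, s) (v, p.2) := by
        refine Or.inr ⟨rfl, hs, hpV', hps, ?_⟩
        rintro ⟨τ, hτV, h1, h2⟩
        have : ((v, τ) : V × ℝ) ∈ M := ⟨hτV, rfl, h1, h2.trans hpt⟩
        have := hpmin _ this
        simp at this
        linarith
      have hsub : (dagVertices E ∩ {q | q.1 = v ∧ p.2 < q.2 ∧ q.2 < t}) ⊆ M \ {p} := by
        rintro q ⟨hqV, hq1, hqs, hqt⟩
        refine ⟨⟨hqV, hq1, hps.trans hqs, hqt⟩, ?_⟩
        intro hqp
        rw [hqp] at hqs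
        exact lt_irrefl _ hqs
      have hcard' : (dagVertices E ∩ {q | q.1 = v ∧ p.2 < q.2 ∧ q.2 < t}).ncard ≤ n := by
        have h1 : (M \ {p}).ncard < M.ncard := by
          have : M \ {p} ⊂ M := by
            rw [Set.ssubset_iff_of_subset Set.diff_subset]
            exact ⟨p, hpM, by simp⟩
          exact Set.ncard_lt_ncard this hMfin
        have h2 := Set.ncard_le_ncard hsub hMfin.diff
        omega
      exact .head edge1 (ih v p.2 t hcard' hpV' ht hpt.le)

/-- **Lemma 2 of the paper.**
For a temporal network with finitely many temporal edges, all of nonnegative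
duration, and temporal vertices `x, y` belonging to the vertex set of the DAG
representation, there is a temporal path from `x` to `y` if and only if there is
a directed path from `x` to `y` in the DAG representation. -/
theorem temporalReach_iff_dag_path {V : Type*} (E : Set (V × V × ℝ × ℝ))
    (hE : E.Finite) (hnn : ∀ e ∈ E, (0 : ℝ) ≤ e.2.2.2)
    (x y : V × ℝ) (hx : x ∈ dagVertices E) (hy : y ∈ dagVertices E) :
    temporalReach E x y ↔ Relation.ReflTransGen (dagEdge E) x y := by
  have wait : ∀ v s t, (v, s) ∈ dagVertices E → (v, t) ∈ dagVertices E → s ≤ t →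
      Relation.ReflTransGen (dagEdge E) (v, s) (v, t) := fun v s t hs ht hst =>
    dag_wait_chain hE _ v s t le_rfl hs ht hst
  constructor
  · intro h
    have main : ∀ x' : V × ℝ, x' ∈ dagVertices E → x'.1 = x.1 → x'.2 ≤ x.2 →
        Relation.ReflTransGen (dagEdge E) x' y := by
      clear hx
      induction h using Relation.ReflTransGen.head_induction_on with
      | refl =>
        intro x' hx' h1 h2
        have hx'eq : x' = (y.1, x'.2) := by
          rw [← h1]
        have hyeq : y = (y.1, y.2) := rfl
        rw [hx'eq, hyeq]
        exact wait y.1 x'.2 y.2 (hx'eq ▸ hx') hy h2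
      | head step hreach ih =>
        rename_i a c
        intro x' hx' h1 h2
        rcases step with ⟨heq, hle⟩ | ⟨σ, lam, hmem, hle1, hle2⟩
        · exact ih x' hx' (h1.trans heq) (h2.trans hle)
        · have hA : ((a.1, σ) : V × ℝ) ∈ dagVertices E := Or.inl ⟨c.1, lam, hmem⟩
          have hB : ((c.1, σ + lam) : V × ℝ) ∈ dagVertices E :=
            Or.inr ⟨a.1, σ, lam, hmem, rfl⟩
          have hx'eq : x' = (a.1, x'.2) := by rw [← h1]
          have chain1 : Relation.ReflTransGen (dagEdge E) x' (a.1, σ) := by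
            rw [hx'eq]
            exact wait a.1 x'.2 σ (hx'eq ▸ hx') hA (h2.trans hle1)
          have edge : dagEdge E (a.1, σ) (c.1, σ + lam) := Or.inl ⟨lam, hmem, rfl⟩
          exact (chain1.tail edge).trans (ih (c.1, σ + lam) hB rfl hle2)
    exact main x hx rfl le_rfl
  · intro h
    refine Relation.ReflTransGen.mono ?_ _ _ h
    rintro a b (⟨lam, hmem, h2⟩ | ⟨heq, _, _, hlt, _⟩)
    · exact Or.inr ⟨a.2, lam, hmem, le_rfl, h2.ge⟩
    · exact Or.inl ⟨heq, hlt.le⟩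
end

section
/- Let (V, E) be a temporal network with E finite and let u ∈ V. If (u, τ) and (u, τ′) both belong to the vertex set V̂ of the DAG representation of (V, E) and τ ≤ τ′, then there is a directed path in the DAG representation from (u, τ) to (u, τ′), i.e., Relation.ReflTransGen Ê (u, τ) (u, τ′). (The chaining of consecutive waiting edges used in the proof of Lemma 2.) -/
/-- In the DAG representation of a temporal network with finitely many temporal edges,
if `(u, τ)` and `(u, τ′)` are both vertices of the DAG representation and `τ ≤ τ′`,
then there is a directed path from `(u, τ)` to `(u, τ′)` (obtained by chaining
consecutive waiting edges). -/
theorem dag_path_of_waiting {V : Type*} (E : Set (V × V × ℝ × ℝ)) (hE : E.Finite)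
    (u : V) (τ τ' : ℝ) (h1 : (u, τ) ∈ dagVertices E) (h2 : (u, τ') ∈ dagVertices E)
    (hle : τ ≤ τ') :
    Relation.ReflTransGen (dagEdge E) (u, τ) (u, τ') := by
  have hSfin : {t : ℝ | (u, t) ∈ dagVertices E}.Finite := by
    have : {t : ℝ | (u, t) ∈ dagVertices E} = (fun t : ℝ => (u, t)) ⁻¹' dagVertices E := rfl
    rw [this]
    exact Set.Finite.preimage (fun a _ b _ h => congrArg Prod.snd h) (dagVertices_finite hE)
  classical
  set S : Finset ℝ := hSfin.toFinset with hS
  have hmemS : ∀ t : ℝ, t ∈ S ↔ (u, t) ∈ dagVertices E := by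
    intro t; simp [hS, Set.Finite.mem_toFinset]
  -- strong induction on the number of vertices in (τ, τ']
  clear_value S
  clear hS hSfin
  -- generalize τ
  have key : ∀ n : ℕ, ∀ τ : ℝ, (S.filter (fun t => τ < t ∧ t ≤ τ')).card = n →
      (u, τ) ∈ dagVertices E → τ ≤ τ' →
      Relation.ReflTransGen (dagEdge E) (u, τ) (u, τ') := by
    intro n
    induction n using Nat.strong_induction_on with
    | _ n ih =>
      intro τ hcard h1 hle
      rcases eq_or_lt_of_le hle with rfl | hlt
      · exact Relation.ReflTransGen.refl
      · have hτ'mem : τ' ∈ S.filter (fun t => τ < t ∧ t ≤ τ') := by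
          simp [Finset.mem_filter, hmemS, h2, hlt]
        have hne : (S.filter (fun t => τ < t ∧ t ≤ τ')).Nonempty := ⟨τ', hτ'mem⟩
        set t0 := (S.filter (fun t => τ < t ∧ t ≤ τ')).min' hne with ht0
        have ht0mem := (S.filter (fun t => τ < t ∧ t ≤ τ')).min'_mem hne
        rw [Finset.mem_filter] at ht0mem
        obtain ⟨ht0S, ht0gt, ht0le⟩ := ht0mem
        have ht0V : (u, t0) ∈ dagVertices E := (hmemS t0).mp ht0S
        have edge : dagEdge E (u, τ) (u, t0) := by
          right
          refine ⟨rfl, h1, ht0V, ht0gt, ?_⟩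
          rintro ⟨t'', hV, hgt, hlt''⟩
          have : t'' ∈ S.filter (fun t => τ < t ∧ t ≤ τ') := by
            simp [Finset.mem_filter, hmemS, hV, hgt, le_of_lt (lt_of_lt_of_le hlt'' ht0le)]
          exact absurd (Finset.min'_le _ _ this) (not_le.mpr hlt'')
        have hsub : S.filter (fun t => t0 < t ∧ t ≤ τ') ⊂ S.filter (fun t => τ < t ∧ t ≤ τ') := by
          constructor
          · intro t ht
            rw [Finset.mem_filter] at ht ⊢
            exact ⟨ht.1, lt_trans ht0gt ht.2.1, ht.2.2⟩
          · intro hcon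
            have := hcon (by simp [Finset.mem_filter, ht0, ht0S, ht0gt, ht0le] :
              t0 ∈ S.filter (fun t => τ < t ∧ t ≤ τ'))
            rw [Finset.mem_filter] at this
            exact lt_irrefl t0 this.2.1
        have hcard' : (S.filter (fun t => t0 < t ∧ t ≤ τ')).card < n :=
          hcard ▸ Finset.card_lt_card hsub
        exact Relation.ReflTransGen.head edge
          (ih _ hcard' t0 rfl ht0V ht0le)
  exact key _ τ rfl h1 hle
end

section
/- Let (V, E) be a temporal network with E finite and all durations nonnegative, let x be a temporal vertex and w ∈ V, and suppose the set {τ ∈ ℝ : x ⇝ (w, τ)} is nonempty. Then the earliest arrival time is attained, x ⇝ (w, τ_eat(x, w)), and for every τ ∈ ℝ one has x ⇝ (w, τ) if and only if τ_eat(x, w) ≤ τ; equivalently, the set {τ ∈ ℝ : x ⇝ (w, τ)} equals the closed half-line [τ_eat(x, w), ∞). -/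
/-- The earliest arrival time `τ_eat(x, w)`: the infimum, in `ℝ ∪ {∞}` (i.e. `EReal`,
with `inf ∅ = ⊤`), of the set of times `τ` with `x ⇝ (w, τ)`. -/
noncomputable def eat {V : Type*} (E : Set (V × V × ℝ × ℝ)) (x : V × ℝ) (w : V) :
    EReal :=
  sInf ((fun τ : ℝ => (τ : EReal)) '' {τ : ℝ | temporalReach E x (w, τ)})

/-- Upward closure: if we can reach `(w, τ)` and `τ ≤ τ'`, we can reach `(w, τ')`. -/
lemma temporalReach_mono {V : Type*} (E : Set (V × V × ℝ × ℝ)) (x : V × ℝ) (w : V)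
    {τ τ' : ℝ} (h : temporalReach E x (w, τ)) (hle : τ ≤ τ') :
    temporalReach E x (w, τ')  :=
  Relation.ReflTransGen.tail h (Or.inl ⟨rfl, hle⟩)

/-- Any reachable temporal vertex is dominated by a reachable temporal vertex whose
time lies in the finite candidate set `{x.2} ∪ {σ + λ : (·,·,σ,λ) ∈ E}`. -/
lemma temporalReach_exists_candidate {V : Type*} (E : Set (V × V × ℝ × ℝ)) (x : V × ℝ)
    {y : V × ℝ} (h : temporalReach E x y) :
    ∃ t ∈ insert x.2 ((fun e : V × V × ℝ × ℝ => e.2.2.1 + e.2.2.2) '' E),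
      t ≤ y.2 ∧ temporalReach E x (y.1, t) := by
  induction h with
  | refl => exact ⟨x.2, Set.mem_insert _ _, le_rfl, Relation.ReflTransGen.refl⟩
  | tail hb hstep ih =>
    rename_i b c
    rcases hstep with ⟨heq, hle⟩ | ⟨σ, lam, hmem, hσ, hend⟩
    · obtain ⟨t, htT, htle, hreach⟩ := ih
      exact ⟨t, htT, htle.trans hle, heq ▸ hreach⟩
    · refine ⟨σ + lam, Set.mem_insert_of_mem _ ⟨_, hmem, rfl⟩, hend, ?_⟩
      exact Relation.ReflTransGen.tail hb (Or.inr ⟨σ, lam, hmem, hσ, le_rfl⟩)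

/-- In a temporal network with finitely many temporal edges, all of nonnegative
duration, if the set of arrival times at `w` from the temporal vertex `x` is
nonempty, then the earliest arrival time is a real number and is attained,
and the set of arrival times is exactly the closed half-line `[τ_eat(x, w), ∞)`. -/
theorem earliest_arrival_attained {V : Type*} (E : Set (V × V × ℝ × ℝ))
    (hE : E.Finite) (hnn : ∀ e ∈ E, (0 : ℝ) ≤ e.2.2.2)
    (x : V × ℝ) (w : V) (hne : {τ : ℝ | temporalReach E x (w, τ)}.Nonempty) :
    ∃ t : ℝ, eat E x w = (t : EReal) ∧ temporalReach E x (w, t) ∧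
      (∀ τ : ℝ, temporalReach E x (w, τ) ↔ t ≤ τ) ∧
      {τ : ℝ | temporalReach E x (w, τ)} = Set.Ici t := by
  set S : Set ℝ := {τ : ℝ | temporalReach E x (w, τ)} with hS
  set T : Set ℝ := insert x.2 ((fun e : V × V × ℝ × ℝ => e.2.2.1 + e.2.2.2) '' E) with hT
  have hTfin : T.Finite := (hE.image _).insert _
  have hSTfin : (S ∩ T).Finite := hTfin.inter_of_right _
  -- S ∩ T nonempty
  obtain ⟨τ₀, hτ₀⟩ := hne
  obtain ⟨t₁, ht₁T, ht₁le, ht₁r⟩ := temporalReach_exists_candidate E x hτ₀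
  have hSTne : (S ∩ T).Nonempty := ⟨t₁, ht₁r, ht₁T⟩
  -- take the minimum
  obtain ⟨t, htST, htmin⟩ := hSTfin.exists_minimalFor id _ hSTne
  have htS : temporalReach E x (w, t) := htST.1
  -- t is a lower bound for S
  have hlb : ∀ τ ∈ S, t ≤ τ := by
    intro τ hτ
    obtain ⟨s, hsT, hsle, hsr⟩ := temporalReach_exists_candidate E x hτ
    have hsST : s ∈ S ∩ T := ⟨hsr, hsT⟩
    rcases le_total t s with h | h
    · exact h.trans hsle
    · exact (htmin hsST h).trans hsle
  have hiff : ∀ τ : ℝ, temporalReach E x (w, τ) ↔ t ≤ τ := fun τ =>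
    ⟨fun h => hlb τ h, fun h => temporalReach_mono E x w htS h⟩
  refine ⟨t, ?_, htS, hiff, ?_⟩
  · apply le_antisymm
    · exact sInf_le ⟨t, htS, rfl⟩
    · refine le_sInf ?_
      rintro a ⟨τ, hτ, rfl⟩
      simpa using EReal.coe_le_coe_iff.mpr (hlb τ hτ)
  · ext τ
    exact hiff τ
end

section
/- Let (V, E) be a temporal network with E finite and all durations nonnegative, let x be a temporal vertex and u ∈ V, and suppose the set {τ ∈ ℝ : (u, τ) ⇝ x} is nonempty. Then the latest departure time is attained, (u, τ_ldt(x, u)) ⇝ x, and for every τ ∈ ℝ one has (u, τ) ⇝ x if and only if τ ≤ τ_ldt(x, u); equivalently, the set {τ ∈ ℝ : (u, τ) ⇝ x} equals the closed half-line (−∞, τ_ldt(x, u)]. -/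
/-- The latest departure time `τ_ldt(x, u)`: the supremum, in `ℝ ∪ {−∞}` (i.e. `EReal`,
with `sup ∅ = −∞ = ⊥`), of the set of times `τ` with `(u, τ) ⇝ x`. -/
noncomputable def ldt {V : Type*} (E : Set (V × V × ℝ × ℝ)) (x : V × ℝ) (u : V) :
    EReal :=
  sSup ((fun τ : ℝ => (τ : EReal)) '' {τ : ℝ | temporalReach E (u, τ) x})

lemma reach_anti {V : Type*} (E : Set (V × V × ℝ × ℝ)) {a : V} {τ τ' : ℝ} {x : V × ℝ}
    (h : τ ≤ τ') (hr : temporalReach E (a, τ') x) : temporalReach E (a, τ) x :=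
  Relation.ReflTransGen.head (show temporalStep E (a, τ) (a, τ') from Or.inl ⟨rfl, h⟩) hr

lemma reach_bound {V : Type*} (E : Set (V × V × ℝ × ℝ)) (x : V × ℝ) :
    ∀ y : V × ℝ, temporalReach E y x →
      ∃ τ' ∈ insert x.2 ((fun e : V × V × ℝ × ℝ => e.2.2.1) '' E),
        y.2 ≤ τ' ∧ temporalReach E (y.1, τ') x := by
  intro y h
  induction h using Relation.ReflTransGen.head_induction_on with
  | refl =>
      exact ⟨x.2, Set.mem_insert _ _, le_refl _, by rw [Prod.mk.eta]; exact Relation.ReflTransGen.refl⟩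
  | head h' h ih =>
      rename_i a c
      rcases h' with ⟨heq, hle⟩ | ⟨σ, lam, hmem, hle, hle2⟩
      · obtain ⟨τ', hτ'T, hle', hr⟩ := ih
        exact ⟨τ', hτ'T, hle.trans hle', heq ▸ hr⟩
      · refine ⟨σ, Set.mem_insert_of_mem _ ⟨_, hmem, rfl⟩, hle, ?_⟩
        exact Relation.ReflTransGen.head (Or.inr ⟨σ, lam, hmem, le_refl _, hle2⟩) h

/-- In a temporal network with finitely many temporal edges, all of nonnegative
duration, if the set of departure times from `u` for arriving at the temporal
vertex `x` is nonempty, then the latest departure time is a real number and is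
attained, and the set of departure times is exactly the closed half-line
`(−∞, τ_ldt(x, u)]`. -/
theorem latest_departure_attained {V : Type*} (E : Set (V × V × ℝ × ℝ))
    (hE : E.Finite) (hnn : ∀ e ∈ E, (0 : ℝ) ≤ e.2.2.2)
    (x : V × ℝ) (u : V) (hne : {τ : ℝ | temporalReach E (u, τ) x}.Nonempty) :
    ∃ t : ℝ, ldt E x u = (t : EReal) ∧ temporalReach E (u, t) x ∧
      (∀ τ : ℝ, temporalReach E (u, τ) x ↔ τ ≤ t) ∧
      {τ : ℝ | temporalReach E (u, τ) x} = Set.Iic t := by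
  set S := {τ : ℝ | temporalReach E (u, τ) x} with hS
  set T := insert x.2 ((fun e : V × V × ℝ × ℝ => e.2.2.1) '' E) with hT
  have hTfin : (T ∩ S).Finite := ((hE.image _).insert _).inter_of_left _
  obtain ⟨τ₀, hτ₀⟩ := hne
  obtain ⟨τ₁, hτ₁T, hle₁, hr₁⟩ := reach_bound E x (u, τ₀) hτ₀
  have hTne : (T ∩ S).Nonempty := ⟨τ₁, hτ₁T, hr₁⟩
  obtain ⟨t, htmem, htmax⟩ := Set.Finite.exists_maximalFor id _ hTfin hTne
  have htS : temporalReach E (u, t) x := htmem.2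
  have hmax : ∀ τ ∈ S, τ ≤ t := by
    intro τ hτ
    obtain ⟨τ', hτ'T, hle, hr⟩ := reach_bound E x (u, τ) hτ
    have : τ' ≤ t := by
      by_contra hc
      push_neg at hc
      exact absurd (htmax ⟨hτ'T, hr⟩ hc.le) (not_le.mpr hc)
    exact hle.trans this
  have hiff : ∀ τ : ℝ, temporalReach E (u, τ) x ↔ τ ≤ t := by
    intro τ
    exact ⟨fun h => hmax τ h, fun h => reach_anti E h htS⟩
  refine ⟨t, ?_, htS, hiff, Set.ext fun τ => hiff τ⟩
  apply le_antisymm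
  · apply sSup_le
    rintro e ⟨τ, hτ, rfl⟩
    show (τ : EReal) ≤ (t : EReal); exact_mod_cast hmax τ hτ
  · exact le_sSup ⟨t, htS, rfl⟩
end
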